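/- Let G be a finite simple graph with at least one edge, and let uv be an edge of G. Then the bondage number satisfies b(G) ≤ d(u) + d(v) − 1 − |N(u) ∩ N(v)|, where d(u), d(v) are the degrees of u and v and N(u) ∩ N(v) is the set of common neighbours of u and v. -/

import Mathlib

/-- A finset `D` of vertices is a dominating set of `G` if every vertex not in `D`
is adjacent to some vertex in `D`. -/
def SimpleGraph.IsDominatingSet {V : Type*} (G : SimpleGraph V) (D : Finset V) : Prop :=
  ∀ v : V, v ∉ D → ∃ u ∈ D, G.Adj u v

/-- The domination number of `G`: the minimum cardinality of a dominating set. -/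
noncomputable def SimpleGraph.dominationNumber {V : Type*} [Fintype V]
    (G : SimpleGraph V) : ℕ :=
  sInf {k | ∃ D : Finset V, G.IsDominatingSet D ∧ D.card = k}

/-- The bondage number of `G`: the minimum cardinality of a set `B` of edges of `G`
whose removal increases the domination number. -/
noncomputable def SimpleGraph.bondageNumber {V : Type*} [Fintype V]
    (G : SimpleGraph V) : ℕ :=
  sInf {k | ∃ B : Finset (Sym2 V), ↑B ⊆ G.edgeSet ∧ B.card = k ∧
    G.dominationNumber < (G.deleteEdges ↑B).dominationNumber}

/-!
Delete every edge at `u`, and every edge from `v` to a vertex outside the closed neighbourhood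
of `u`; these are at most `d(u) + d(v) - 1 - |N(u) ∩ N(v)|` edges. In the resulting graph `H` the vertex
`u` is isolated, so it lies in every dominating set `D` of `H`, and every remaining neighbour of
`v` is a neighbour of `u` in `G`. Hence `D \ {u}` dominates `G`: the vertex `u` is dominated by
`v` or by whichever vertex of `D` dominates `v` in `H`. So `γ(G) < γ(H)`.
-/

namespace SimpleGraph

section Domination

variable {V : Type*} {G H : SimpleGraph V} {D : Finset V} {u v : V}

theorem IsDominatingSet.mem_of_forall_not_adj (hD : H.IsDominatingSet D)
    (hu : ∀ w, ¬ H.Adj u w) : u ∈ D := by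
  by_contra huD
  obtain ⟨w, -, hwu⟩ := hD u huD
  exact hu w hwu.symm

theorem IsDominatingSet.erase_of_forall_not_adj [DecidableEq V] (hHG : H ≤ G)
    (hD : H.IsDominatingSet D) (hu : ∀ w, ¬ H.Adj u w) (huv : G.Adj u v)
    (hv : ∀ w, H.Adj v w → G.Adj u w) : G.IsDominatingSet (D.erase u) := by
  intro w hw
  by_cases hwu : w = u
  · subst hwu
    by_cases hvD : v ∈ D
    · exact ⟨v, Finset.mem_erase.2 ⟨huv.ne', hvD⟩, huv.symm⟩
    · obtain ⟨x, hxD, hxv⟩ := hD v hvD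
      have hwx : G.Adj w x := hv x hxv.symm
      exact ⟨x, Finset.mem_erase.2 ⟨hwx.ne', hxD⟩, hwx.symm⟩
  · obtain ⟨x, hxD, hxw⟩ := hD w fun hwD => hw (Finset.mem_erase.2 ⟨hwu, hwD⟩)
    have hxu : x ≠ u := by rintro rfl; exact hu w hxw
    exact ⟨x, Finset.mem_erase.2 ⟨hxu, hxD⟩, hHG hxw⟩

variable [Fintype V]

theorem dominationNumber_le_card (hD : G.IsDominatingSet D) : G.dominationNumber ≤ D.card :=
  Nat.sInf_le ⟨D, hD, rfl⟩

theorem exists_isDominatingSet_card_eq_dominationNumber (G : SimpleGraph V) :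
    ∃ D : Finset V, G.IsDominatingSet D ∧ D.card = G.dominationNumber :=
  Nat.sInf_mem (s := {k | ∃ D : Finset V, G.IsDominatingSet D ∧ D.card = k})
    ⟨_, Finset.univ, fun w hw => absurd (Finset.mem_univ w) hw, rfl⟩

theorem dominationNumber_lt_of_forall_not_adj (hHG : H ≤ G) (hu : ∀ w, ¬ H.Adj u w)
    (huv : G.Adj u v) (hv : ∀ w, H.Adj v w → G.Adj u w) :
    G.dominationNumber < H.dominationNumber := by
  classical
  obtain ⟨D, hD, hDcard⟩ := H.exists_isDominatingSet_card_eq_dominationNumber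
  have huD : u ∈ D := hD.mem_of_forall_not_adj hu
  calc G.dominationNumber ≤ (D.erase u).card :=
        dominationNumber_le_card (hD.erase_of_forall_not_adj hHG hu huv hv)
    _ < D.card := Finset.card_erase_lt_of_mem huD
    _ = H.dominationNumber := hDcard

theorem bondageNumber_le_card {B : Finset (Sym2 V)} (hB : ↑B ⊆ G.edgeSet)
    (hlt : G.dominationNumber < (G.deleteEdges ↑B).dominationNumber) :
    G.bondageNumber ≤ B.card :=
  Nat.sInf_le ⟨B, hB, rfl, hlt⟩

end Domination

section IsolatingEdges

variable {V : Type*} [Fintype V] [DecidableEq V] (G : SimpleGraph V) [DecidableRel G.Adj]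

def isolatingEdges (u v : V) : Finset (Sym2 V) :=
  G.incidenceFinset u ∪
    (G.neighborFinset v \ insert u (G.neighborFinset u ∩ G.neighborFinset v)).image (s(v, ·))

variable {G} {u v w : V}

theorem isolatingEdges_subset_edgeSet : ↑(G.isolatingEdges u v) ⊆ G.edgeSet := by
  intro e he
  simp only [isolatingEdges, Finset.coe_union, Finset.coe_image, coe_incidenceFinset,
    Set.mem_union, Set.mem_image, Finset.mem_coe, Finset.mem_sdiff, mem_neighborFinset] at he
  rcases he with he | ⟨w, ⟨hvw, -⟩, rfl⟩
  · exact G.incidenceSet_subset u he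
  · exact hvw

theorem card_isolatingEdges_le (huv : G.Adj u v) :
    (G.isolatingEdges u v).card ≤
      G.degree u + G.degree v - 1 - (G.neighborFinset u ∩ G.neighborFinset v).card := by
  set C := G.neighborFinset u ∩ G.neighborFinset v
  have huC : u ∉ C := by simp [C]
  have hCv : insert u C ⊆ G.neighborFinset v :=
    Finset.insert_subset ((mem_neighborFinset _ _ _).2 huv.symm) Finset.inter_subset_right
  have hcard := Finset.card_le_card hCv
  rw [Finset.card_insert_of_notMem huC, card_neighborFinset_eq_degree] at hcard
  calc (G.isolatingEdges u v).card
      ≤ (G.incidenceFinset u).card + (G.neighborFinset v \ insert u C).card :=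
        (Finset.card_union_le _ _).trans (Nat.add_le_add_left Finset.card_image_le _)
    _ = G.degree u + (G.degree v - (C.card + 1)) := by
        rw [card_incidenceFinset_eq_degree, Finset.card_sdiff_of_subset hCv,
          Finset.card_insert_of_notMem huC, card_neighborFinset_eq_degree]
    _ = G.degree u + G.degree v - 1 - C.card := by omega

theorem not_adj_deleteEdges_isolatingEdges :
    ¬ (G.deleteEdges ↑(G.isolatingEdges u v)).Adj u w := by
  rw [deleteEdges_adj, not_and_not_right, Finset.mem_coe]
  exact fun huw =>
    Finset.mem_union_left _ ((mem_incidenceFinset _ _ _).2 ((mem_incidenceSet _ _ _).2 huw))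

theorem adj_of_adj_deleteEdges_isolatingEdges (huv : G.Adj u v)
    (hvw : (G.deleteEdges ↑(G.isolatingEdges u v)).Adj v w) : G.Adj u w := by
  rw [deleteEdges_adj, Finset.mem_coe] at hvw
  obtain ⟨hvw, hnot⟩ := hvw
  by_contra huw
  have hwu : w ≠ u := by
    rintro rfl
    exact hnot (Finset.mem_union_left _
      ((mem_incidenceFinset _ _ _).2 (Sym2.eq_swap ▸ (mem_incidenceSet _ _ _).2 huv)))
  refine hnot (Finset.mem_union_right _ (Finset.mem_image.2 ⟨w, ?_, rfl⟩))
  simp [hvw, hwu, huw]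

end IsolatingEdges

end SimpleGraph

open SimpleGraph in
theorem stmt_0 {V : Type*} [Fintype V] [DecidableEq V] (G : SimpleGraph V)
    [DecidableRel G.Adj] (u v : V) (huv : G.Adj u v) :
    G.bondageNumber ≤ G.degree u + G.degree v - 1 -
      (G.neighborFinset u ∩ G.neighborFinset v).card :=
  calc G.bondageNumber ≤ (G.isolatingEdges u v).card :=
        bondageNumber_le_card isolatingEdges_subset_edgeSet <|
          dominationNumber_lt_of_forall_not_adj (G.deleteEdges_le _)
            (fun _ => not_adj_deleteEdges_isolatingEdges) huv
            (fun _ => adj_of_adj_deleteEdges_isolatingEdges huv)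
    _ ≤ _ := card_isolatingEdges_le huv
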